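/- arXiv:cond-mat/0007425 — 3 statements merged into one kernel-verified Lean document; each statement's English description precedes it below -/
import Mathlib

section
/- Let A be an N×N Hermitian matrix and for k = 0,…,N−1 let Aᵏ denote the matrix consisting of the k-th supra- and infra-diagonals of A (entries a_{i,i+k} and a_{i+k,i}, zero elsewhere). Let ψ ∈ ℂᴺ be a unit vector, set d_k = ⟨ψ, Aᵏ ψ⟩ and λ = ⟨ψ, A ψ⟩ = Σ_k d_k. Then for any positive integer M ≤ N there exists n ∈ [0, N−M] and a unit vector φ ∈ ℂᴺ supported on indices n+1,…,n+M such that ⟨φ, A φ⟩ ≤ λ + (C/M²) Σ_{k=1}^{M−1} k² |d_k| + C Σ_{k=M}^{N−1} |d_k|, where C > 0 is a universal constant. -/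
/-!
Write `f(t) = max 0 (min (t + 1) (M - t))` for the tent supported on `[0, M)` and
`γ(k) = ∑ₜ f(t) f(t + k)` for its autocorrelation, and put `φₙ = f(· - n) ψ`. Summing over all
translates `n`, `∑ₙ ‖φₙ‖² = γ(0)` and `∑ₙ ⟨φₙ, A φₙ⟩ = ∑ₖ γ(k) dₖ`. Since `2 (γ(0) - γ(k))` is the
squared distance between `f` and its translate by `k`, and `f` is 1-Lipschitz, `γ(0) - γ(k) ≤ M k²`;
moreover `γ(k) = 0` for `k ≥ M` and `γ(0) ≥ M³ / 64`. Hence the average energy `∑ₙ ⟨φₙ, A φₙ⟩` is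
at most `(λ + error) ∑ₙ ‖φₙ‖²`, and some translate `φₙ ≠ 0` does at least as well as the average.
-/

open Finset Function Matrix

namespace MatrixLocalization

def tent (M : ℕ) (t : ℤ) : ℤ := max 0 (min (t + 1) (M - t))

noncomputable def autocorr (M : ℕ) (k : ℤ) : ℤ := ∑ᶠ t, tent M t * tent M (t + k)

variable {M : ℕ}

lemma tent_support_subset : support (tent M) ⊆ Set.Ico 0 (M : ℤ) := by
  intro t ht
  simp only [mem_support, tent] at ht
  simp only [Set.mem_Ico]
  omega

lemma abs_tent_sub_tent_le (s t : ℤ) : |tent M s - tent M t| ≤ |s - t| := by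
  unfold tent
  rcases abs_cases (s - t) with ⟨h, h'⟩ | ⟨h, h'⟩ <;> rw [h, abs_le] <;> omega

lemma autocorr_neg (k : ℤ) : autocorr M (-k) = autocorr M k := by
  rw [autocorr, ← finsum_comp_equiv (Equiv.addRight k)]
  simp only [Equiv.coe_addRight, add_neg_cancel_right]
  exact finsum_congr fun t => mul_comm _ _

lemma autocorr_eq_zero_of_le {k : ℤ} (hk : M ≤ k) : autocorr M k = 0 := by
  refine finsum_eq_zero_of_forall_eq_zero fun t => ?_
  by_contra h
  have h₁ := tent_support_subset (left_ne_zero_of_mul h)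
  have h₂ := tent_support_subset (right_ne_zero_of_mul h)
  simp only [Set.mem_Ico] at h₁ h₂
  omega

lemma autocorr_zero_eq_sum : autocorr M 0 = ∑ t ∈ Ico 0 (M : ℤ), tent M t ^ 2 := by
  rw [autocorr, finsum_eq_sum_of_support_subset (s := Ico 0 (M : ℤ))]
  · simp [sq]
  · intro t ht
    simpa using tent_support_subset (left_ne_zero_of_mul ht)

lemma autocorr_zero_nonneg : 0 ≤ autocorr M 0 := by
  rw [autocorr_zero_eq_sum]
  positivity

lemma two_mul_autocorr_zero_sub {k : ℤ} (hk : 0 ≤ k) :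
    2 * (autocorr M 0 - autocorr M k) =
      ∑ t ∈ Icc (-k) (M - 1), (tent M t - tent M (t + k)) ^ 2 := by
  have mem_of_ne {t c : ℤ} (hc : 0 ≤ c ∧ c ≤ k) (h : tent M (t + c) ≠ 0) :
      t ∈ (Icc (-k) (M - 1) : Set ℤ) := by
    have := tent_support_subset h
    simp only [Set.mem_Ico, coe_Icc, Set.mem_Icc] at this ⊢
    omega
  have h₀ : autocorr M 0 = ∑ t ∈ Icc (-k) (M - 1), tent M t * tent M t := by
    simp only [autocorr, add_zero]
    exact finsum_eq_sum_of_support_subset _ fun t ht =>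
      mem_of_ne (c := 0) ⟨le_rfl, hk⟩ (by simpa using left_ne_zero_of_mul ht)
  have h₀' : autocorr M 0 = ∑ t ∈ Icc (-k) (M - 1), tent M (t + k) * tent M (t + k) := by
    rw [autocorr, ← finsum_comp_equiv (Equiv.addRight k)]
    simp only [Equiv.coe_addRight, add_zero]
    exact finsum_eq_sum_of_support_subset _ fun t ht =>
      mem_of_ne ⟨hk, le_rfl⟩ (left_ne_zero_of_mul ht)
  have hk' : autocorr M k = ∑ t ∈ Icc (-k) (M - 1), tent M t * tent M (t + k) :=
    finsum_eq_sum_of_support_subset _ fun t ht =>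
      mem_of_ne (c := 0) ⟨le_rfl, hk⟩ (by simpa using left_ne_zero_of_mul ht)
  rw [two_mul, sub_add_sub_comm]
  nth_rw 1 [h₀]
  rw [h₀', hk', ← sum_add_distrib, ← sum_add_distrib, ← sum_sub_distrib]
  exact sum_congr rfl fun t _ => by ring

lemma autocorr_le_autocorr_zero {k : ℤ} (hk : 0 ≤ k) : autocorr M k ≤ autocorr M 0 := by
  have h := two_mul_autocorr_zero_sub (M := M) hk
  have : 0 ≤ ∑ t ∈ Icc (-k) (M - 1), (tent M t - tent M (t + k)) ^ 2 :=
    sum_nonneg fun _ _ => sq_nonneg _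
  linarith

lemma autocorr_zero_sub_le {k : ℤ} (hk : 0 ≤ k) :
    2 * (autocorr M 0 - autocorr M k) ≤ (M + k) * k ^ 2 := by
  rw [two_mul_autocorr_zero_sub hk]
  calc _ ≤ ∑ t ∈ Icc (-k) (M - 1), k ^ 2 :=
        sum_le_sum fun t _ => sq_le_sq.2 <| by simpa using abs_tent_sub_tent_le t (t + k)
    _ = (M + k) * k ^ 2 := by simp [Int.card_Icc]; omega

lemma cube_le_autocorr_zero : (M : ℤ) ^ 3 ≤ 64 * autocorr M 0 := by
  rcases M.eq_zero_or_pos with rfl | hM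
  · simp [autocorr_zero_eq_sum]
  -- on the middle quarter `[M/4, M/2]` the tent is at least `M/4`
  set S := Icc ((M : ℤ) / 4) (M / 2)
  have hS : (M : ℤ) ≤ 4 * #S := by simp only [S, Int.card_Icc]; omega
  have htent : ∀ t ∈ S, (M : ℤ) ^ 2 ≤ 16 * tent M t ^ 2 := fun t ht => by
    have : (M : ℤ) ≤ 4 * tent M t := by simp only [S, mem_Icc] at ht; unfold tent; omega
    nlinarith
  calc (M : ℤ) ^ 3 ≤ 4 * (#S * M ^ 2) := by nlinarith
    _ ≤ 4 * ∑ t ∈ S, 16 * tent M t ^ 2 := by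
        gcongr
        simpa using card_nsmul_le_sum S _ _ htent
    _ ≤ 64 * ∑ t ∈ Ico 0 (M : ℤ), tent M t ^ 2 := by
        rw [← mul_sum, ← mul_assoc]
        refine mul_le_mul_of_nonneg_left
          (sum_le_sum_of_subset_of_nonneg ?_ fun t _ _ => sq_nonneg _) (by norm_num)
        intro t ht
        simp only [S, mem_Icc, mem_Ico] at ht ⊢
        omega
    _ = 64 * autocorr M 0 := by rw [autocorr_zero_eq_sum]

lemma autocorr_zero_pos (hM : 0 < M) : 0 < autocorr M 0 := by
  have := cube_le_autocorr_zero (M := M)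
  have : (0 : ℤ) < M ^ 3 := by positivity
  omega

lemma sq_mul_autocorr_zero_sub_le {k : ℤ} (hk : 0 ≤ k) (hkM : k ≤ M) :
    (M : ℤ) ^ 2 * (autocorr M 0 - autocorr M k) ≤ 64 * autocorr M 0 * k ^ 2 := by
  have h₁ := autocorr_zero_sub_le (M := M) hk
  have h₂ := cube_le_autocorr_zero (M := M)
  have h₃ : 0 ≤ autocorr M 0 - autocorr M k := sub_nonneg.2 (autocorr_le_autocorr_zero hk)
  nlinarith [sq_nonneg k, mul_le_mul_of_nonneg_left hkM (sq_nonneg k),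
    mul_le_mul_of_nonneg_left h₁ (sq_nonneg (M : ℤ))]

lemma sum_autocorr_mul_le {N : ℕ} (hM : 0 < M) (hMN : M ≤ N) (D a : ℕ → ℝ)
    (hD : ∀ k, |D k| ≤ a k) :
    ∑ k ∈ range N, (autocorr M k : ℝ) * D k ≤ autocorr M 0 * (∑ k ∈ range N, D k
      + 64 / (M : ℝ) ^ 2 * ∑ k ∈ Ico 1 M, (k : ℝ) ^ 2 * a k + 64 * ∑ k ∈ Ico M N, a k) := by
  set γ : ℤ → ℝ := fun k => autocorr M k
  have ha (k : ℕ) : 0 ≤ a k := (abs_nonneg _).trans (hD k)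
  have hnear : ∀ k ∈ Ico 1 M, (γ 0 - γ k) * a k ≤ γ 0 * (64 / (M : ℝ) ^ 2 * (k ^ 2 * a k)) :=
    fun k hk => by
      have h : ((M : ℤ) : ℝ) ^ 2 * (γ 0 - γ k) ≤ 64 * γ 0 * (k : ℝ) ^ 2 := by
        simp only [γ]
        exact_mod_cast sq_mul_autocorr_zero_sub_le (M := M) (Int.natCast_nonneg k)
          (by simp only [mem_Ico] at hk; omega)
      rw [Int.cast_natCast, ← le_div_iff₀' (by positivity)] at h
      calc _ ≤ 64 * γ 0 * (k : ℝ) ^ 2 / M ^ 2 * a k := by gcongr; exact ha k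
        _ = _ := by ring
  have hfar : ∀ k ∈ Ico M N, (γ 0 - γ k) * a k ≤ γ 0 * (64 * a k) := fun k hk => by
    have hγ₀ : 0 ≤ γ 0 := by simp only [γ]; exact_mod_cast autocorr_zero_nonneg (M := M)
    have hγk : γ k = 0 := by
      simp only [γ, autocorr_eq_zero_of_le (M := M) (k := k) (by simp only [mem_Ico] at hk; omega),
        Int.cast_zero]
    nlinarith [ha k]
  calc ∑ k ∈ range N, γ k * D k
      = γ 0 * ∑ k ∈ range N, D k + ∑ k ∈ range N, (γ 0 - γ k) * -D k := by
        rw [mul_sum, ← sum_add_distrib]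
        exact sum_congr rfl fun k _ => by ring
    _ ≤ γ 0 * ∑ k ∈ range N, D k + ∑ k ∈ range N, (γ 0 - γ k) * a k := by
        gcongr with k
        · exact sub_nonneg.2 <| Int.cast_le.2 <| autocorr_le_autocorr_zero (Int.natCast_nonneg k)
        · exact (neg_le_abs _).trans (hD k)
    _ = γ 0 * ∑ k ∈ range N, D k
          + (∑ k ∈ Ico 1 M, (γ 0 - γ k) * a k + ∑ k ∈ Ico M N, (γ 0 - γ k) * a k) := by
        rw [range_eq_Ico, ← sum_Ico_consecutive (fun k => (γ 0 - γ k) * a k) (Nat.zero_le M) hMN,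
          sum_eq_sum_Ico_succ_bot hM]
        simp
    _ ≤ γ 0 * ∑ k ∈ range N, D k + (∑ k ∈ Ico 1 M, γ 0 * (64 / (M : ℝ) ^ 2 * (k ^ 2 * a k))
          + ∑ k ∈ Ico M N, γ 0 * (64 * a k)) :=
        add_le_add_right (add_le_add (sum_le_sum hnear) (sum_le_sum hfar)) _
    _ = _ := by simp only [← mul_sum]; ring

lemma exists_pos_and_le_mul_of_sum_le {ι : Type*} {s : Finset ι} {w E : ι → ℝ} {μ : ℝ}
    (hw : ∀ i ∈ s, 0 ≤ w i) (hE : ∀ i ∈ s, w i = 0 → E i = 0) (hpos : 0 < ∑ i ∈ s, w i)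
    (h : ∑ i ∈ s, E i ≤ μ * ∑ i ∈ s, w i) : ∃ i ∈ s, 0 < w i ∧ E i ≤ μ * w i := by
  have hpos_of_ne {f : ι → ℝ} (hf : ∀ i ∈ s, f i ≠ 0 → w i ≠ 0) :
      ∑ i ∈ s with 0 < w i, f i = ∑ i ∈ s, f i :=
    sum_filter_of_ne fun i hi hfi => (hw i hi).lt_of_ne' (hf i hi hfi)
  have hw' := hpos_of_ne (f := w) fun _ _ => id
  have hE' := hpos_of_ne (f := E) fun i hi hEi hwi => hEi (hE i hi hwi)
  have hne : (s.filter (0 < w ·)).Nonempty := by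
    by_contra h'
    rw [not_nonempty_iff_eq_empty.1 h', sum_empty] at hw'
    exact hpos.ne hw'
  obtain ⟨i, hi, hle⟩ := exists_le_of_sum_le hne (g := fun i => μ * w i)
    (by rw [hE', ← mul_sum, hw']; exact h)
  exact ⟨i, (mem_filter.1 hi).1, (mem_filter.1 hi).2, hle⟩

section Quadratic

variable {ι : Type*} [Fintype ι]

lemma eq_zero_of_sum_norm_sq_eq_zero {φ : ι → ℂ} (h : ∑ i, ‖φ i‖ ^ 2 = 0) : φ = 0 :=
  funext fun i => norm_eq_zero.1 <| pow_eq_zero_iff two_ne_zero |>.1 <|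
    (sum_eq_zero_iff_of_nonneg fun _ _ => sq_nonneg _).1 h i (mem_univ i)

lemma sum_norm_sq_smul (c : ℝ) (φ : ι → ℂ) :
    ∑ i, ‖(c • φ) i‖ ^ 2 = c ^ 2 * ∑ i, ‖φ i‖ ^ 2 := by
  simp only [Pi.smul_apply, norm_smul, Real.norm_eq_abs, mul_pow, sq_abs, mul_sum]

lemma re_star_smul_dotProduct_mulVec_smul (A : Matrix ι ι ℂ) (c : ℝ) (φ : ι → ℂ) :
    (star (c • φ) ⬝ᵥ A *ᵥ (c • φ)).re = c ^ 2 * (star φ ⬝ᵥ A *ᵥ φ).re := by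
  rw [star_smul, star_trivial, mulVec_smul, smul_dotProduct, dotProduct_smul, smul_smul,
    Complex.smul_re, smul_eq_mul, sq]

lemma star_dotProduct_mulVec_weight (A : Matrix ι ι ℂ) (ψ : ι → ℂ) (g : ι → ℝ) :
    star (fun i => (g i : ℂ) * ψ i) ⬝ᵥ A *ᵥ (fun i => (g i : ℂ) * ψ i) =
      star ψ ⬝ᵥ (of fun i j => ((g i * g j : ℝ) : ℂ) * A i j) *ᵥ ψ := by
  simp only [dotProduct, mulVec, Pi.star_apply, star_mul', Complex.star_def, Complex.conj_ofReal,
    of_apply, mul_sum]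
  refine sum_congr rfl fun i _ => sum_congr rfl fun j _ => ?_
  push_cast
  ring

end Quadratic

variable {N : ℕ}

/-- The paper's `Aᵏ`. -/
def bandPart {α : Type*} [Zero α] (A : Matrix (Fin N) (Fin N) α) (k : ℕ) :
    Matrix (Fin N) (Fin N) α :=
  of fun i j => if (i : ℕ) + k = j ∨ (j : ℕ) + k = i then A i j else 0

lemma sum_smul_bandPart {α : Type*} [Semiring α] (A : Matrix (Fin N) (Fin N) α) (v : ℤ → α)
    (hv : ∀ k, v (-k) = v k) :
    ∑ k ∈ range N, v k • bandPart A k = of fun i j : Fin N => v ((j : ℤ) - i) * A i j := by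
  ext i j
  have hband (k : ℕ) : (i : ℕ) + k = j ∨ (j : ℕ) + k = i ↔ ((j : ℤ) - i).natAbs = k := by omega
  simp only [Matrix.sum_apply, Matrix.smul_apply, bandPart, of_apply, hband, smul_eq_mul,
    mul_ite, mul_zero]
  rw [sum_ite_eq, if_pos (mem_range.2 (by omega))]
  rcases Int.natAbs_eq ((j : ℤ) - i) with h | h
  · rw [← h]
  · conv_rhs => rw [h, hv]

lemma sum_bandPart {α : Type*} [Semiring α] (A : Matrix (Fin N) (Fin N) α) :
    ∑ k ∈ range N, bandPart A k = A := by
  have h := sum_smul_bandPart A (fun _ => 1) fun _ => rfl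
  simp only [one_smul, one_mul] at h
  exact h

lemma sum_tent_mul_tent {i j : ℤ} (hi : i ∈ Ico 0 (N : ℤ)) :
    ∑ n ∈ Ioo (-(M : ℤ)) N, tent M (i - n) * tent M (j - n) = autocorr M (j - i) := by
  rw [autocorr, ← finsum_comp_equiv (Equiv.subLeft i), ← finsum_eq_sum_of_support_subset]
  · simp only [Equiv.subLeft_apply, sub_add_sub_cancel']
  · intro n hn
    have := tent_support_subset (left_ne_zero_of_mul hn)
    simp only [Set.mem_Ico, mem_Ico, coe_Ioo, Set.mem_Ioo] at this hi ⊢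
    omega

noncomputable def localize (M : ℕ) (ψ : Fin N → ℂ) (n : ℤ) : Fin N → ℂ :=
  fun i => ((tent M (i - n) : ℝ) : ℂ) * ψ i

lemma sum_sum_norm_localize_sq (ψ : Fin N → ℂ) :
    ∑ n ∈ Ioo (-(M : ℤ)) N, ∑ i, ‖localize M ψ n i‖ ^ 2 = autocorr M 0 * ∑ i, ‖ψ i‖ ^ 2 := by
  simp only [localize, norm_mul, Complex.norm_real, Real.norm_eq_abs, mul_pow, sq_abs]
  rw [sum_comm, mul_sum]
  refine sum_congr rfl fun i _ => ?_
  rw [← sum_mul]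
  congr 1
  have := sum_tent_mul_tent (M := M) (N := N) (i := i) (j := i)
    (mem_Ico.2 ⟨by positivity, by omega⟩)
  rw [sub_self] at this
  exact_mod_cast (sum_congr rfl fun n _ => sq _).trans this

lemma sum_localize_dotProduct_mulVec (A : Matrix (Fin N) (Fin N) ℂ) (ψ : Fin N → ℂ) :
    ∑ n ∈ Ioo (-(M : ℤ)) N, star (localize M ψ n) ⬝ᵥ A *ᵥ localize M ψ n =
      ∑ k ∈ range N, (autocorr M k : ℂ) * (star ψ ⬝ᵥ bandPart A k *ᵥ ψ) := by
  have hsum : ∑ n ∈ Ioo (-(M : ℤ)) N,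
      (of fun i j : Fin N => ((tent M (i - n) * tent M (j - n) : ℝ) : ℂ) * A i j) =
      ∑ k ∈ range N, (autocorr M k : ℂ) • bandPart A k := by
    rw [sum_smul_bandPart A (fun k => (autocorr M k : ℂ)) fun k => by rw [autocorr_neg]]
    ext i j
    simp only [Matrix.sum_apply, of_apply, ← sum_mul]
    rw [← sum_tent_mul_tent (N := N) (i := i) (j := j) (mem_Ico.2 ⟨by positivity, by omega⟩)]
    push_cast
    rfl
  unfold localize
  rw [sum_congr rfl fun n _ => star_dotProduct_mulVec_weight A ψ fun i => tent M (i - n),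
    ← dotProduct_sum, ← sum_mulVec, hsum, sum_mulVec, dotProduct_sum]
  simp only [smul_mulVec, dotProduct_smul, smul_eq_mul]

lemma sum_re_localize_le (hM : 0 < M) (hMN : M ≤ N) (A : Matrix (Fin N) (Fin N) ℂ)
    (ψ : Fin N → ℂ) :
    ∑ n ∈ Ioo (-(M : ℤ)) N, (star (localize M ψ n) ⬝ᵥ A *ᵥ localize M ψ n).re ≤
      ((star ψ ⬝ᵥ A *ᵥ ψ).re
        + 64 / (M : ℝ) ^ 2 * ∑ k ∈ Ico 1 M, (k : ℝ) ^ 2 * ‖star ψ ⬝ᵥ bandPart A k *ᵥ ψ‖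
        + 64 * ∑ k ∈ Ico M N, ‖star ψ ⬝ᵥ bandPart A k *ᵥ ψ‖) * autocorr M 0 := by
  have hbands : (star ψ ⬝ᵥ A *ᵥ ψ).re = ∑ k ∈ range N, (star ψ ⬝ᵥ bandPart A k *ᵥ ψ).re := by
    conv_lhs => rw [← sum_bandPart A, sum_mulVec, dotProduct_sum, Complex.re_sum]
  calc _ = (∑ n ∈ Ioo (-(M : ℤ)) N, star (localize M ψ n) ⬝ᵥ A *ᵥ localize M ψ n).re :=
        (Complex.re_sum _ _).symm
    _ = ∑ k ∈ range N, (autocorr M k : ℝ) * (star ψ ⬝ᵥ bandPart A k *ᵥ ψ).re := by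
        rw [sum_localize_dotProduct_mulVec, Complex.re_sum]
        exact sum_congr rfl fun k _ => by simp
    _ ≤ _ := sum_autocorr_mul_le hM hMN _ _ fun k => Complex.abs_re_le_norm _
    _ = _ := by rw [hbands]; ring

end MatrixLocalization

open MatrixLocalization

/-- Localization of large matrices (Lieb–Solovej, Appendix A).  `Ak k` is the matrix
consisting of the `k`-th supra- and infra-diagonals of the Hermitian matrix `A`. -/
theorem stmt_2 : ∃ C : ℝ, 0 < C ∧
    ∀ (N : ℕ) (A : Matrix (Fin N) (Fin N) ℂ), A.IsHermitian →
    ∀ ψ : Fin N → ℂ, (∑ i, ‖ψ i‖ ^ 2) = 1 →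
    ∀ M : ℕ, 0 < M → M ≤ N →
    ∃ n : ℕ, n ≤ N - M ∧ ∃ φ : Fin N → ℂ,
      (∑ i, ‖φ i‖ ^ 2) = 1 ∧
      (∀ j : Fin N, ((j : ℕ) < n ∨ n + M ≤ (j : ℕ)) → φ j = 0) ∧
      (dotProduct (star φ) (A.mulVec φ)).re ≤
        (dotProduct (star ψ) (A.mulVec ψ)).re
        + (C / (M : ℝ) ^ 2) * ∑ k ∈ Finset.Ico 1 M,
            (k : ℝ) ^ 2 * ‖dotProduct (star ψ)
              ((Matrix.of fun i j : Fin N =>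
                if (i : ℕ) + k = (j : ℕ) ∨ (j : ℕ) + k = (i : ℕ) then A i j else 0).mulVec ψ)‖
        + C * ∑ k ∈ Finset.Ico M N,
            ‖dotProduct (star ψ)
              ((Matrix.of fun i j : Fin N =>
                if (i : ℕ) + k = (j : ℕ) ∨ (j : ℕ) + k = (i : ℕ) then A i j else 0).mulVec ψ)‖ := by
  refine ⟨64, by norm_num, fun N A _ ψ hψ M hM hMN => ?_⟩
  set w : ℤ → ℝ := fun n => ∑ i, ‖localize M ψ n i‖ ^ 2
  have hsum_w : ∑ n ∈ Ioo (-(M : ℤ)) N, w n = autocorr M 0 := by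
    rw [sum_sum_norm_localize_sq, hψ, mul_one]
  obtain ⟨n, -, hwn, hEn⟩ := exists_pos_and_le_mul_of_sum_le (fun n _ => by positivity)
    (fun n _ hn => by simp [eq_zero_of_sum_norm_sq_eq_zero hn])
    (hsum_w ▸ by exact_mod_cast autocorr_zero_pos hM) (hsum_w ▸ sum_re_localize_le hM hMN A ψ)
  refine ⟨(max 0 (min n (N - M))).toNat, by omega, (√(w n))⁻¹ • localize M ψ n, ?_, ?_, ?_⟩
  · rw [sum_norm_sq_smul, inv_pow, Real.sq_sqrt hwn.le, inv_mul_cancel₀ hwn.ne']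
  · intro j hj
    have : tent M (j - n) = 0 := by
      by_contra h
      have := tent_support_subset h
      simp only [Set.mem_Ico] at this
      omega
    simp [localize, this]
  · rw [re_star_smul_dotProduct_mulVec_smul, inv_pow, Real.sq_sqrt hwn.le, inv_mul_le_iff₀ hwn,
      mul_comm]
    exact hEn
end

section
/- Let f: ℤ → ℝ be the normalized tent function f(s) = A_M (M+1−2|s|) for 2|s| < M (M odd) and f(s) = 0 otherwise, with A_M chosen so that Σ_s f(s)² = 1. Then γ_k := (1/2) Σ_s (f(s) − f(s+k))² satisfies γ_k ≤ C k²/(k² + M²) for all k ≥ 0 and all M, with a universal constant C. -/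
/-!
Write `f = A_M • tent M` with `tent M s = max 0 (M + 1 - 2|s|)`. There are two bounds on
`γ_k`. Crudely, `(a - b)² ≤ 2a² + 2b²` and shift invariance give `γ_k ≤ 2`. For `k ≤ M`, the
tent is `2`-Lipschitz and `f - f(· + k)` lives on `M + k ≤ 2M` points, so
`γ_k ≤ ½ · 2M · (2k)² · A_M²`; since `Σ tent² ≥ M³/3`, the normalization forces
`A_M² ≤ 3/M³`, whence `γ_k ≤ 12k²/M²`. Together the two bounds give `C = 24`.
-/

open Finset
open scoped NNReal

noncomputable def tent (M : ℕ) (s : ℤ) : ℝ := max 0 ((M : ℝ) + 1 - 2 * |(s : ℝ)|)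

lemma lipschitzWith_tent (M : ℕ) : LipschitzWith 2 (tent M) := by
  refine LipschitzWith.of_dist_le_mul fun s t => ?_
  rw [Real.dist_eq, Int.dist_eq, tent, tent, max_comm 0, max_comm 0]
  calc |max _ 0 - max _ 0| ≤ |((M : ℝ) + 1 - 2 * |(s : ℝ)|) - ((M : ℝ) + 1 - 2 * |(t : ℝ)|)| :=
        abs_max_sub_max_le_abs _ _ 0
    _ = |2 * (|(t : ℝ)| - |(s : ℝ)|)| := by congr 1; ring
    _ = 2 * |(|(t : ℝ)| - |(s : ℝ)|)| := by rw [abs_mul, abs_two]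
    _ ≤ 2 * |(t : ℝ) - s| := mul_le_mul_of_nonneg_left (abs_abs_sub_abs_le_abs_sub _ _) zero_le_two
    _ = _ := by rw [abs_sub_comm]; norm_num

lemma tent_odd_eq_zero {m : ℕ} {s : ℤ} (hs : (m : ℤ) < |s|) : tent (2 * m + 1) s = 0 := by
  have : (m : ℝ) + 1 ≤ |(s : ℝ)| := by rw [← Int.cast_abs]; exact_mod_cast hs
  rw [tent, max_eq_left]; push_cast; linarith

lemma ite_eq_mul_tent {M : ℕ} (hM : Odd M) (A : ℝ) (s : ℤ) :
    (if 2 * |s| < (M : ℤ) then A * ((M : ℝ) + 1 - 2 * |(s : ℝ)|) else 0) = A * tent M s := by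
  obtain ⟨m, rfl⟩ := hM
  split_ifs with h
  · rw [tent, max_eq_right]
    have : |s| ≤ m := by push_cast at h; omega
    have : (|(s : ℝ)|) ≤ m := by rw [← Int.cast_abs]; exact_mod_cast this
    push_cast; linarith
  · rw [tent_odd_eq_zero (by push_cast at h; omega), mul_zero]

lemma Icc_neg_succ_eq_insert (n : ℕ) :
    Icc (-((n : ℤ) + 1)) (n + 1) =
      insert (-((n : ℤ) + 1)) (insert ((n : ℤ) + 1) (Icc (-(n : ℤ)) n)) := by
  ext x; simp only [mem_Icc, mem_insert]; omega

lemma sum_Icc_neg_sq_sub_abs (c : ℝ) (m : ℕ) :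
    ∑ s ∈ Icc (-(m : ℤ)) m, (c - |(s : ℝ)|) ^ 2
      = (2 * m + 1) * c ^ 2 - 2 * c * m * (m + 1) + m * (m + 1) * (2 * m + 1) / 3 := by
  induction m with
  | zero => simp
  | succ n ih =>
    push_cast
    rw [Icc_neg_succ_eq_insert, sum_insert (by simp only [mem_insert, mem_Icc]; omega),
      sum_insert (by simp only [mem_Icc]; omega), ih]
    push_cast
    rw [abs_neg, abs_of_nonneg (by positivity)]
    ring

lemma tsum_tent_sq (m : ℕ) :
    ∑' s, tent (2 * m + 1) s ^ 2 = 4 * (m + 1) ^ 2 + 4 * m * (m + 1) * (2 * m + 1) / 3 := by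
  rw [tsum_eq_sum (s := Icc (-(m : ℤ)) m) fun s hs => by
    rw [tent_odd_eq_zero (lt_abs.2 (by rw [mem_Icc] at hs; omega)), sq, mul_zero]]
  have h : ∀ s ∈ Icc (-(m : ℤ)) m, tent (2 * m + 1) s ^ 2 = 4 * ((m + 1) - |(s : ℝ)|) ^ 2 := by
    intro s hs
    have : |(s : ℝ)| ≤ m := by
      rw [← Int.cast_abs]; exact_mod_cast abs_le.2 (mem_Icc.1 hs)
    rw [tent, max_eq_right (by push_cast; linarith)]; push_cast; ring
  rw [sum_congr rfl h, ← mul_sum, sum_Icc_neg_sq_sub_abs]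
  ring

lemma cube_le_three_mul_tsum_tent_sq {M : ℕ} (hM : Odd M) :
    (M : ℝ) ^ 3 ≤ 3 * ∑' s, tent M s ^ 2 := by
  obtain ⟨m, rfl⟩ := hM
  rw [tsum_tent_sq]; push_cast
  nlinarith [(Nat.cast_nonneg m : (0 : ℝ) ≤ m)]

lemma sq_le_three_div_cube_of_tsum_eq_one {M : ℕ} (hM : Odd M) {A : ℝ}
    (h : ∑' s, (A * tent M s) ^ 2 = 1) : A ^ 2 ≤ 3 / (M : ℝ) ^ 3 := by
  simp_rw [mul_pow] at h
  rw [tsum_mul_left] at h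
  have hMpos : (0 : ℝ) < M := by exact_mod_cast hM.pos
  rw [le_div_iff₀ (by positivity)]
  nlinarith [cube_le_three_mul_tsum_tent_sq hM, sq_nonneg A]

lemma tsum_sq_sub_add_le {G : Type*} [AddGroup G] {f : G → ℝ} (hf : Summable (f · ^ 2)) (g : G) :
    ∑' s, (f s - f (s + g)) ^ 2 ≤ 4 * ∑' s, f s ^ 2 := by
  have hshift : Summable (fun s => f (s + g) ^ 2) := hf.comp_injective (add_left_injective g)
  have hbound : ∀ s, (f s - f (s + g)) ^ 2 ≤ 2 * f s ^ 2 + 2 * f (s + g) ^ 2 := fun s => by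
    nlinarith [sq_nonneg (f s + f (s + g))]
  have hsum := (hf.mul_left 2).add (hshift.mul_left 2)
  calc ∑' s, (f s - f (s + g)) ^ 2 ≤ ∑' s, (2 * f s ^ 2 + 2 * f (s + g) ^ 2) :=
        (hsum.of_nonneg_of_le (fun _ => sq_nonneg _) hbound).tsum_le_tsum hbound hsum
    _ = 4 * ∑' s, f s ^ 2 := by
      rw [(hf.mul_left 2).tsum_add (hshift.mul_left 2), hf.tsum_mul_left, hshift.tsum_mul_left,
        show ∑' s, f (s + g) ^ 2 = ∑' s, f s ^ 2 from (Equiv.addRight g).tsum_eq (f · ^ 2)]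
      ring

lemma tsum_sq_sub_add_le_of_lipschitzWith {f : ℤ → ℝ} {L : ℝ≥0} (hf : LipschitzWith L f) {m : ℕ}
    (hsupp : ∀ s, (m : ℤ) < |s| → f s = 0) (k : ℕ) :
    ∑' s, (f s - f (s + k)) ^ 2 ≤ (2 * m + 1 + k) * (L * k) ^ 2 := by
  have hzero : ∀ s ∉ Icc (-(m : ℤ) - k) m, (f s - f (s + k)) ^ 2 = 0 := by
    intro s hs
    rw [mem_Icc] at hs
    rw [hsupp s (lt_abs.2 (by omega)), hsupp (s + k) (lt_abs.2 (by omega))]; ring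
  have hterm : ∀ s, (f s - f (s + k)) ^ 2 ≤ (L * k) ^ 2 := by
    intro s
    have := hf.dist_le_mul s (s + k)
    rw [Real.dist_eq, Int.dist_eq] at this
    push_cast at this
    rw [← sq_abs]
    gcongr
    simpa using this
  rw [tsum_eq_sum hzero]
  calc _ ≤ #(Icc (-(m : ℤ) - k) m) • (L * k : ℝ) ^ 2 := sum_le_card_nsmul _ _ _ fun s _ => hterm s
    _ = _ := by
      rw [Int.card_Icc, nsmul_eq_mul, show (m + 1 - (-(m : ℤ) - k)).toNat = 2 * m + 1 + k by omega]
      push_cast; ring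

lemma le_mul_sq_div_sq_add_sq {γ k M : ℝ} (hk : 0 ≤ k) (hM : 0 < M) (hγ : γ ≤ 2)
    (hsmall : k ≤ M → γ ≤ 12 * k ^ 2 / M ^ 2) : γ ≤ 24 * k ^ 2 / (k ^ 2 + M ^ 2) := by
  rcases le_or_gt k M with hkM | hkM
  · refine (hsmall hkM).trans ?_
    rw [div_le_div_iff₀ (by positivity) (by positivity)]
    nlinarith [mul_le_mul hkM hkM hk hM.le, sq_nonneg k]
  · refine hγ.trans ?_
    rw [le_div_iff₀ (by positivity)]
    nlinarith

/-- Discrete Dirichlet energy of shifted normalized tent functions: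
`γ_k = (1/2) Σ_s (f(s) − f(s+k))² ≤ C k²/(k² + M²)` with a universal constant. -/
theorem stmt_3 : ∃ C : ℝ, 0 < C ∧
    ∀ (M : ℕ), Odd M → ∀ AM : ℝ,
    let f : ℤ → ℝ := fun s =>
      if 2 * |s| < (M : ℤ) then AM * ((M : ℝ) + 1 - 2 * |(s : ℝ)|) else 0
    (∑' s : ℤ, f s ^ 2) = 1 →
    ∀ k : ℕ,
      (1 / 2) * ∑' s : ℤ, (f s - f (s + (k : ℤ))) ^ 2 ≤
        C * (k : ℝ) ^ 2 / ((k : ℝ) ^ 2 + (M : ℝ) ^ 2) := by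
  refine ⟨24, by norm_num, ?_⟩
  intro M hM AM f hnorm k
  have hf : ∀ s, f s = AM * tent M s := ite_eq_mul_tent hM AM
  have hMpos : (0 : ℝ) < M := by exact_mod_cast hM.pos
  apply le_mul_sq_div_sq_add_sq k.cast_nonneg hMpos
  · have hsum : Summable (f · ^ 2) := by
      by_contra h
      rw [tsum_eq_zero_of_not_summable h] at hnorm
      exact zero_ne_one hnorm
    linarith [tsum_sq_sub_add_le hsum (k : ℤ)]
  · intro hkM
    simp_rw [hf] at hnorm ⊢
    have hA := sq_le_three_div_cube_of_tsum_eq_one hM hnorm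
    have htent : ∑' s, (tent M s - tent M (s + k)) ^ 2 ≤ (M + k) * (2 * k) ^ 2 := by
      obtain ⟨m, rfl⟩ := hM
      have := tsum_sq_sub_add_le_of_lipschitzWith (lipschitzWith_tent (2 * m + 1))
        (fun s hs => tent_odd_eq_zero hs) k
      push_cast at this ⊢
      exact this
    simp_rw [← mul_sub, mul_pow]
    rw [tsum_mul_left]
    calc (1 / 2 : ℝ) * (AM ^ 2 * ∑' s, (tent M s - tent M (s + k)) ^ 2)
        ≤ 1 / 2 * (3 / (M : ℝ) ^ 3 * ((M + k) * (2 * k) ^ 2)) := by gcongr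
      _ ≤ 1 / 2 * (3 / (M : ℝ) ^ 3 * (2 * M * (2 * k) ^ 2)) := by gcongr; linarith
      _ = 12 * k ^ 2 / (M : ℝ) ^ 2 := by field_simp; ring
end

section
/- Let b_k, b*_k be operators on a Hilbert space with b_k = ã(χ_k)a*_0 and b*_k = ã*(χ_k)a_0 for some fixed vector operators, and suppose the commutators satisfy [b_k, b*_k] ≤ N·1 and [b_{−k}, b*_{−k}] ≤ N·1 for some constant N > 0. Then for constants A ≥ B > 0 and κ ∈ ℂ one has A(b*_k b_k + b*_{−k} b_{−k}) + B(b*_k b*_{−k} + b_k b_{−k}) + κ(b*_k + b_{−k}) + κ̄(b_k + b*_{−k}) ≥ −(A − √(A²−B²)) N − 2|κ|²/(A+B). -/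
/-!
Completing the square: with `D(1 + α²) = A`, `2Dα = B`, `x = b_k ψ + α b_{-k}* ψ` and
`y = b_{-k} ψ + α b_k* ψ`, the quadratic part of the form equals
`D(‖x‖² + ‖y‖²) - Dα²(‖b_k* ψ‖² - ‖b_k ψ‖² + ‖b_{-k}* ψ‖² - ‖b_{-k} ψ‖²)`, and the commutator
bounds control the subtracted term by `2Dα² N ‖ψ‖² = (A - √(A² - B²)) N ‖ψ‖²`. The linear terms
are absorbed by shifting `x` and `y` by multiples of `ψ`, at a cost of `2|κ|²/(A + B)` since
`D(1 + α)² = A + B`.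
-/

open ContinuousLinearMap

open scoped InnerProductSpace

section Bogoliubov

variable {H : Type*} [NormedAddCommGroup H] [InnerProductSpace ℂ H]

theorem Complex.re_inner_self_eq_norm_sq (x : H) : (⟪x, x⟫_ℂ).re = ‖x‖ ^ 2 :=
  inner_self_eq_norm_sq (𝕜 := ℂ) x

theorem norm_add_ofReal_smul_sq (u v : H) (α : ℝ) :
    ‖u + (α : ℂ) • v‖ ^ 2 = ‖u‖ ^ 2 + 2 * α * (⟪u, v⟫_ℂ).re + α ^ 2 * ‖v‖ ^ 2 := by
  rw [norm_add_sq (𝕜 := ℂ), inner_smul_right, norm_smul, Complex.norm_real, Real.norm_eq_abs,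
    mul_pow, sq_abs]
  simp only [RCLike.re_to_complex, Complex.re_ofReal_mul]
  ring

theorem neg_norm_sq_div_mul_le_re_mul_inner {D : ℝ} (hD : 0 < D) (w : ℂ) (x ψ : H) :
    -(‖w‖ ^ 2 / D * ‖ψ‖ ^ 2) ≤ D * ‖x‖ ^ 2 + 2 * (w * ⟪x, ψ⟫_ℂ).re := by
  have hCS : -(w * ⟪x, ψ⟫_ℂ).re ≤ ‖w‖ * ‖x‖ * ‖ψ‖ := calc
    -(w * ⟪x, ψ⟫_ℂ).re ≤ ‖w * ⟪x, ψ⟫_ℂ‖ := (neg_le_abs _).trans (Complex.abs_re_le_norm _)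
    _ ≤ ‖w‖ * ‖x‖ * ‖ψ‖ := by rw [norm_mul, mul_assoc]; gcongr; exact norm_inner_le_norm x ψ
  have hAMGM : 2 * (‖w‖ * ‖x‖ * ‖ψ‖) ≤ D * ‖x‖ ^ 2 + ‖w‖ ^ 2 / D * ‖ψ‖ ^ 2 := by
    rw [div_mul_eq_mul_div, ← sub_nonneg]
    have : 0 ≤ (D * ‖x‖ - ‖w‖ * ‖ψ‖) ^ 2 / D := by positivity
    convert this using 1
    field_simp
    ring
  linarith

theorem neg_two_mul_norm_sq_div_mul_le_re_mul_inner_add {D : ℝ} (hD : 0 < D) (w : ℂ)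
    (x y ψ : H) :
    -(2 * ‖w‖ ^ 2 / D * ‖ψ‖ ^ 2) ≤
      D * (‖x‖ ^ 2 + ‖y‖ ^ 2) + 2 * (w * (⟪x, ψ⟫_ℂ + ⟪ψ, y⟫_ℂ)).re := by
  have hx := neg_norm_sq_div_mul_le_re_mul_inner hD w x ψ
  have hy := neg_norm_sq_div_mul_le_re_mul_inner hD (starRingEnd ℂ w) y ψ
  have hconj : (starRingEnd ℂ w * ⟪y, ψ⟫_ℂ).re = (w * ⟪ψ, y⟫_ℂ).re := by
    rw [← Complex.conj_re, map_mul, Complex.conj_conj, inner_conj_symm]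
  rw [Complex.norm_conj, hconj] at hy
  rw [mul_add w, Complex.add_re]
  linear_combination hx + hy

/-- `α = (A - √(A² - B²)) / B` is the smaller root of `Bα² - 2Aα + B = 0`. -/
theorem exists_bogoliubov_coeffs {A B : ℝ} (hB : 0 < B) (hAB : B ≤ A) :
    ∃ α D : ℝ, 0 < α ∧ 0 < D ∧ D * (1 + α ^ 2) = A ∧ 2 * D * α = B ∧
      2 * D * α ^ 2 = A - √(A ^ 2 - B ^ 2) := by
  set s := √(A ^ 2 - B ^ 2)
  have hs : s ^ 2 = A ^ 2 - B ^ 2 := Real.sq_sqrt (by nlinarith)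
  have hsA : s < A := by nlinarith [Real.sqrt_nonneg (A ^ 2 - B ^ 2)]
  have hAs : 0 < A - s := by linarith
  have hα : 0 < (A - s) / B := div_pos hAs hB
  refine ⟨(A - s) / B, B / (2 * ((A - s) / B)), hα, by positivity, ?_, by field_simp, ?_⟩
  · field_simp
    linear_combination hs
  · field_simp

variable [CompleteSpace H]

theorem re_inner_commutator_adjoint (T : H →L[ℂ] H) (ψ : H) :
    (⟪ψ, (T ∘L adjoint T - adjoint T ∘L T) ψ⟫_ℂ).re = ‖adjoint T ψ‖ ^ 2 - ‖T ψ‖ ^ 2 := by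
  rw [sub_apply, inner_sub_right, comp_apply, comp_apply, adjoint_inner_right,
    ← adjoint_inner_left T, Complex.sub_re, Complex.re_inner_self_eq_norm_sq,
    Complex.re_inner_self_eq_norm_sq]

theorem re_inner_bogoliubov_form (b c : H →L[ℂ] H) (A B : ℝ) (κ : ℂ) (ψ : H) :
    (⟪ψ, (((A : ℝ) : ℂ) • (adjoint b ∘L b + adjoint c ∘L c)
        + ((B : ℝ) : ℂ) • (adjoint b ∘L adjoint c + b ∘L c)
        + κ • (adjoint b + c) + (starRingEnd ℂ κ) • (b + adjoint c)) ψ⟫_ℂ).re =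
      A * (‖b ψ‖ ^ 2 + ‖c ψ‖ ^ 2) + B * ((⟪b ψ, adjoint c ψ⟫_ℂ).re + (⟪c ψ, adjoint b ψ⟫_ℂ).re)
        + 2 * (κ * (⟪b ψ, ψ⟫_ℂ + ⟪ψ, c ψ⟫_ℂ)).re := by
  have hconj : starRingEnd ℂ κ * (⟪ψ, b ψ⟫_ℂ + ⟪c ψ, ψ⟫_ℂ) =
      starRingEnd ℂ (κ * (⟪b ψ, ψ⟫_ℂ + ⟪ψ, c ψ⟫_ℂ)) := by
    simp only [map_mul, map_add, inner_conj_symm]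
  have hbc : (⟪b (c ψ), ψ⟫_ℂ).re = (⟪ψ, b (c ψ)⟫_ℂ).re := inner_re_symm (𝕜 := ℂ) _ _
  simp only [add_apply, smul_apply, comp_apply, inner_add_right, inner_smul_right,
    adjoint_inner_right, hconj, hbc]
  simp only [Complex.add_re, Complex.re_ofReal_mul, Complex.conj_re,
    Complex.re_inner_self_eq_norm_sq]
  ring

end Bogoliubov

theorem stmt_14_general {H : Type*} [NormedAddCommGroup H] [InnerProductSpace ℂ H] [CompleteSpace H]
    (bk bmk : H →L[ℂ] H) (N : ℝ)
    (hck : ∀ ψ : H,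
      (inner ℂ ψ ((bk ∘L adjoint bk - adjoint bk ∘L bk) ψ) : ℂ).re ≤ N * ‖ψ‖ ^ 2)
    (hcmk : ∀ ψ : H,
      (inner ℂ ψ ((bmk ∘L adjoint bmk - adjoint bmk ∘L bmk) ψ) : ℂ).re ≤ N * ‖ψ‖ ^ 2)
    (A B : ℝ) (hAB : B ≤ A) (hB : 0 < B) (κ : ℂ) :
    ∀ ψ : H,
      (-((A - Real.sqrt (A ^ 2 - B ^ 2)) * N) - 2 * ‖κ‖ ^ 2 / (A + B)) * ‖ψ‖ ^ 2 ≤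
      (inner ℂ ψ ((((A : ℝ) : ℂ) • (adjoint bk ∘L bk + adjoint bmk ∘L bmk)
        + ((B : ℝ) : ℂ) • (adjoint bk ∘L adjoint bmk + bk ∘L bmk)
        + κ • (adjoint bk + bmk)
        + (starRingEnd ℂ κ) • (bk + adjoint bmk)) ψ) : ℂ).re := by
  intro ψ
  obtain ⟨α, D, hα, hD, rfl, rfl, hDα⟩ := exists_bogoliubov_coeffs hB hAB
  have hk := hck ψ
  have hmk := hcmk ψ
  rw [re_inner_commutator_adjoint] at hk hmk
  have hsq := neg_two_mul_norm_sq_div_mul_le_re_mul_inner_add hD (κ / (1 + α))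
    (bk ψ + (α : ℂ) • adjoint bmk ψ) (bmk ψ + (α : ℂ) • adjoint bk ψ) ψ
  have hlin : κ / (1 + α) * (⟪bk ψ + (α : ℂ) • adjoint bmk ψ, ψ⟫_ℂ +
      ⟪ψ, bmk ψ + (α : ℂ) • adjoint bk ψ⟫_ℂ) = κ * (⟪bk ψ, ψ⟫_ℂ + ⟪ψ, bmk ψ⟫_ℂ) := by
    simp only [inner_add_left, inner_add_right, inner_smul_left, inner_smul_right,
      adjoint_inner_left, adjoint_inner_right, Complex.conj_ofReal]
    have : (1 + α : ℂ) ≠ 0 := by exact_mod_cast (by positivity : (1 + α : ℝ) ≠ 0)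
    field_simp
    ring
  have hw : 2 * ‖κ / (1 + α)‖ ^ 2 / D = 2 * ‖κ‖ ^ 2 / (D * (1 + α ^ 2) + 2 * D * α) := by
    have h1α : ‖(1 + α : ℂ)‖ = 1 + α := by
      exact_mod_cast Real.norm_of_nonneg (by positivity : (0 : ℝ) ≤ 1 + α)
    rw [norm_div, h1α]
    field_simp
    ring
  rw [norm_add_ofReal_smul_sq, norm_add_ofReal_smul_sq, hlin, hw] at hsq
  rw [re_inner_bogoliubov_form, ← hDα]
  have hDα2 : 0 ≤ D * α ^ 2 := by positivity
  linarith [mul_le_mul_of_nonneg_left hk hDα2, mul_le_mul_of_nonneg_left hmk hDα2]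

/-- Simple case of Bogolubov's method (Theorem 6.3 combined with the commutator
bound): if `[b_k, b_k*] ≤ N` and `[b_{−k}, b_{−k}*] ≤ N`, then for `A ≥ B > 0`
and `κ ∈ ℂ`,
`A(b_k* b_k + b_{−k}* b_{−k}) + B(b_k* b_{−k}* + b_k b_{−k}) + κ(b_k* + b_{−k})
 + κ̄(b_k + b_{−k}*) ≥ −(A − √(A²−B²)) N − 2|κ|²/(A+B)` as quadratic forms. -/
theorem stmt_14 {H : Type*} [NormedAddCommGroup H] [InnerProductSpace ℂ H] [CompleteSpace H]
    (bk bmk : H →L[ℂ] H) (N : ℝ) (hN : 0 < N)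
    (hck : ∀ ψ : H,
      (inner ℂ ψ ((bk ∘L adjoint bk - adjoint bk ∘L bk) ψ) : ℂ).re ≤ N * ‖ψ‖ ^ 2)
    (hcmk : ∀ ψ : H,
      (inner ℂ ψ ((bmk ∘L adjoint bmk - adjoint bmk ∘L bmk) ψ) : ℂ).re ≤ N * ‖ψ‖ ^ 2)
    (A B : ℝ) (hAB : B ≤ A) (hB : 0 < B) (κ : ℂ) :
    ∀ ψ : H,
      (-((A - Real.sqrt (A ^ 2 - B ^ 2)) * N) - 2 * ‖κ‖ ^ 2 / (A + B)) * ‖ψ‖ ^ 2 ≤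
      (inner ℂ ψ ((((A : ℝ) : ℂ) • (adjoint bk ∘L bk + adjoint bmk ∘L bmk)
        + ((B : ℝ) : ℂ) • (adjoint bk ∘L adjoint bmk + bk ∘L bmk)
        + κ • (adjoint bk + bmk)
        + (starRingEnd ℂ κ) • (bk + adjoint bmk)) ψ) : ℂ).re :=
  stmt_14_general bk bmk N hck hcmk A B hAB hB κ
end
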